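/- Let G be a virtually cyclic group with finite generating set X, and suppose Y is a generating set of G such that G acts acylindrically on the hyperbolic Cayley graph Γ(G,Y) and some element g ∈ G acts loxodromically (its orbit map n ↦ gⁿ is a quasi-isometric embedding of ℤ into Γ(G,Y)). Then Y is equivalent to X, i.e., sup_{y∈Y} |y|_X < ∞ (equivalently, Y generates G properly: the action of G on Γ(G,Y) is proper and Y is finite up to equivalence). -/
import Mathlib


open Filter Topology

/-- Word length of `g` with respect to a generating set `X`. -/
noncomputable def wlen {G : Type*} [Group G] (X : Set G) (g : G) : ℕ :=
  sInf {n | ∃ l : List G, (∀ x ∈ l, x ∈ X ∨ x⁻¹ ∈ X) ∧ l.prod = g ∧ l.length = n}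

/-- The Gromov product in the Cayley graph `Γ(G, Y)` with base point `t`. -/
noncomputable def gpCay {G : Type*} [Group G] (Y : Set G) (t x y : G) : ℝ :=
  ((wlen Y (x⁻¹ * t) : ℝ) + (wlen Y (y⁻¹ * t) : ℝ) - (wlen Y (x⁻¹ * y) : ℝ)) / 2

/-- The left action of `G` on the Cayley graph `Γ(G, Y)` is acylindrical. -/
def AcylCayley {G : Type*} [Group G] (Y : Set G) : Prop :=
  ∀ ε : ℝ, 0 < ε → ∃ (R : ℝ) (N : ℕ), ∀ x y : G, R ≤ (wlen Y (x⁻¹ * y) : ℝ) →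
    ∃ F : Finset G,
      (∀ g : G, (wlen Y (x⁻¹ * (g * x)) : ℝ) ≤ ε ∧ (wlen Y (y⁻¹ * (g * y)) : ℝ) ≤ ε →
        g ∈ F) ∧ F.card ≤ N

section Aux

variable {G : Type*} [Group G]

lemma wlen_le_length (X : Set G) (h : G) (l : List G)
    (hl : ∀ x ∈ l, x ∈ X ∨ x⁻¹ ∈ X) (hp : l.prod = h) : wlen X h ≤ l.length :=
  Nat.sInf_le ⟨l, hl, hp, rfl⟩

lemma wlen_exists (X : Set G) (hX : Subgroup.closure X = ⊤) (h : G) :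
    ∃ l : List G, (∀ x ∈ l, x ∈ X ∨ x⁻¹ ∈ X) ∧ l.prod = h ∧ l.length = wlen X h := by
  have hmem : h ∈ Subgroup.closure X := by rw [hX]; trivial
  have hmem' : h ∈ Submonoid.closure (X ∪ X⁻¹) := by
    rw [← Subgroup.closure_toSubmonoid]; exact hmem
  obtain ⟨l, hl, hp⟩ := Submonoid.exists_list_of_mem_closure hmem'
  have hne : {n | ∃ l : List G, (∀ x ∈ l, x ∈ X ∨ x⁻¹ ∈ X) ∧ l.prod = h ∧ l.length = n}.Nonempty := by
    refine ⟨l.length, l, fun x hx => ?_, hp, rfl⟩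
    rcases hl x hx with h1 | h1
    · exact Or.inl h1
    · exact Or.inr (Set.mem_inv.mp h1)
  have := Nat.sInf_mem hne
  obtain ⟨l', h1, h2, h3⟩ := this
  exact ⟨l', h1, h2, h3⟩

lemma wlen_one (X : Set G) : wlen X (1 : G) = 0 :=
  Nat.le_zero.mp (wlen_le_length X 1 [] (by simp) (by simp))

lemma wlen_mul_le (X : Set G) (hX : Subgroup.closure X = ⊤) (a b : G) :
    wlen X (a * b) ≤ wlen X a + wlen X b := by
  obtain ⟨la, hla, hpa, hna⟩ := wlen_exists X hX a
  obtain ⟨lb, hlb, hpb, hnb⟩ := wlen_exists X hX b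
  have := wlen_le_length X (a * b) (la ++ lb)
    (fun x hx => by rcases List.mem_append.mp hx with h | h; exacts [hla x h, hlb x h])
    (by rw [List.prod_append, hpa, hpb])
  simpa [List.length_append, hna, hnb] using this

lemma wlen_inv (X : Set G) (hX : Subgroup.closure X = ⊤) (a : G) :
    wlen X a⁻¹ = wlen X a := by
  have key : ∀ b : G, wlen X b⁻¹ ≤ wlen X b := by
    intro b
    obtain ⟨l, hl, hp, hn⟩ := wlen_exists X hX b
    have := wlen_le_length X b⁻¹ ((l.map fun x => x⁻¹).reverse)
      (fun x hx => by
        rcases List.mem_map.mp (List.mem_reverse.mp hx) with ⟨y, hy, rfl⟩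
        rcases hl y hy with h | h
        · exact Or.inr (by simpa using h)
        · exact Or.inl h)
      (by rw [← List.prod_inv_reverse, hp])
    simpa [hn] using this
  exact le_antisymm (key a) (by simpa using key a⁻¹)

lemma wlen_pow_le (X : Set G) (hX : Subgroup.closure X = ⊤) (a : G) (n : ℕ) :
    wlen X (a ^ n) ≤ n * wlen X a := by
  induction n with
  | zero => simp [wlen_one]
  | succ n ih =>
      calc wlen X (a ^ (n + 1)) = wlen X (a ^ n * a) := by rw [pow_succ]
        _ ≤ wlen X (a ^ n) + wlen X a := wlen_mul_le X hX _ _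
        _ ≤ n * wlen X a + wlen X a := by omega
        _ = (n + 1) * wlen X a := by ring

lemma wlen_zpow (X : Set G) (hX : Subgroup.closure X = ⊤) (a : G) (z : ℤ) :
    wlen X (a ^ z) = wlen X (a ^ z.natAbs) := by
  rcases Int.natAbs_eq z with h | h
  · nth_rewrite 1 [h]; rw [zpow_natCast]
  · nth_rewrite 1 [h]; rw [zpow_neg, zpow_natCast, wlen_inv X hX]

end Aux

/-- If `G` is virtually cyclic with finite generating set `X`, and `Y` is a generating set
such that `Γ(G, Y)` is hyperbolic, the action of `G` on it is acylindrical, and some `g ∈ G`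
is loxodromic (positive translation number), then `Y` is equivalent to `X`:
`sup_{y ∈ Y} |y|_X < ∞`. -/
theorem stmt19 {G : Type*} [Group G]
    (X : Set G) (hXfin : X.Finite) (hXgen : Subgroup.closure X = ⊤)
    (c : G) (hvc : (Subgroup.zpowers c).FiniteIndex)
    (Y : Set G) (hYgen : Subgroup.closure Y = ⊤)
    (δ : ℝ) (hδ : 0 ≤ δ)
    (hhyp : ∀ x y z t : G, min (gpCay Y t x y) (gpCay Y t y z) - 8 * δ ≤ gpCay Y t x z)
    (hacyl : AcylCayley Y)
    (g : G) (τ : ℝ) (hτpos : 0 < τ)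
    (hlox : Tendsto (fun n : ℕ => (wlen Y (g ^ n) : ℝ) / n) atTop (𝓝 τ)) :
    ∃ C : ℕ, ∀ y ∈ Y, wlen X y ≤ C := by
  classical
  set H : Subgroup G := Subgroup.zpowers c with hH
  haveI := hvc
  haveI : Finite (G ⧸ H) := inferInstance
  haveI : Fintype (G ⧸ H) := Fintype.ofFinite _
  -- growth bound: ∃ N ≥ 1, ∀ n ≥ N, τ/2 * n ≤ wlen Y (g^n)
  have hgrow : ∃ N : ℕ, 1 ≤ N ∧ ∀ n : ℕ, N ≤ n → τ / 2 * n ≤ (wlen Y (g ^ n) : ℝ) := by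
    have hev : ∀ᶠ n : ℕ in atTop, τ / 2 < (wlen Y (g ^ n) : ℝ) / n :=
      hlox.eventually (eventually_gt_nhds (by linarith))
    obtain ⟨N0, hN0⟩ := eventually_atTop.mp hev
    refine ⟨max N0 1, le_max_right _ _, fun n hn => ?_⟩
    have h1 : N0 ≤ n := le_trans (le_max_left _ _) hn
    have h2 : (1 : ℕ) ≤ n := le_trans (le_max_right _ _) hn
    have hnpos : (0 : ℝ) < n := by exact_mod_cast h2
    have := hN0 n h1
    rw [lt_div_iff₀ hnpos] at this
    linarith
  obtain ⟨N, hN1, hN⟩ := hgrow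
  -- pigeonhole: ∃ m ≥ 1, g ^ m ∈ H
  have hpig : ∃ m : ℕ, 1 ≤ m ∧ g ^ m ∈ H := by
    obtain ⟨i, j, hij, heq⟩ :=
      Finite.exists_ne_map_eq_of_infinite (fun n : ℕ => ((g ^ n : G) : G ⧸ H))
    rcases hij.lt_or_gt with hlt | hlt
    · refine ⟨j - i, by omega, ?_⟩
      have := QuotientGroup.eq.mp heq
      have heq2 : (g ^ i)⁻¹ * g ^ j = g ^ (j - i) := by
        have hpj : g ^ j = g ^ i * g ^ (j - i) := by
          rw [← pow_add]; congr 1; omega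
        rw [hpj]; group
      rwa [heq2] at this
    · refine ⟨i - j, by omega, ?_⟩
      have := QuotientGroup.eq.mp heq.symm
      have heq2 : (g ^ j)⁻¹ * g ^ i = g ^ (i - j) := by
        have hpj : g ^ i = g ^ j * g ^ (i - j) := by
          rw [← pow_add]; congr 1; omega
        rw [hpj]; group
      rwa [heq2] at this
  obtain ⟨m, hm1, hmH⟩ := hpig
  obtain ⟨d, hd⟩ := Subgroup.mem_zpowers_iff.mp hmH
  -- d ≠ 0
  have hd0 : d ≠ 0 := by
    intro h
    rw [h] at hd
    simp only [zpow_zero] at hd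
    have hb := hN (m * N) (Nat.le_mul_of_pos_left N (by omega))
    have : g ^ (m * N) = 1 := by rw [pow_mul, ← hd, one_pow]
    rw [this, wlen_one] at hb
    have hmN : (0 : ℝ) < (m * N : ℕ) := by
      have : 1 ≤ m * N := Nat.one_le_iff_ne_zero.mpr (by positivity)
      exact_mod_cast this
    nlinarith
  set e : ℕ := d.natAbs with he
  have he0 : 0 < e := Int.natAbs_pos.mpr hd0
  -- wlen Y (c ^ ((e:ℤ) * k)) = wlen Y (g ^ (m * k.natAbs))
  have hkey : ∀ k : ℤ, wlen Y (c ^ ((e : ℤ) * k)) = wlen Y (g ^ (m * k.natAbs)) := by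
    intro k
    have hce : c ^ ((e : ℤ) * k) = (c ^ (e : ℤ)) ^ k := by rw [zpow_mul]
    rcases Int.natAbs_eq d with hsgn | hsgn
    · have h1 : c ^ (e : ℤ) = g ^ m := by rw [← hsgn, hd]
      rw [hce, h1, ← zpow_natCast g m, ← zpow_mul,
        wlen_zpow Y hYgen, Int.natAbs_mul]
      simp
    · have h1 : c ^ (e : ℤ) = (g ^ m)⁻¹ := by
        have : (e : ℤ) = -d := by omega
        rw [this, zpow_neg, hd]
      rw [hce, h1, inv_zpow, ← zpow_natCast g m, ← zpow_mul, ← zpow_neg,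
        wlen_zpow Y hYgen]
      congr 1
      rw [Int.natAbs_neg, Int.natAbs_mul]
      simp
  -- constants
  set M : ℕ := Finset.univ.sup (fun q : G ⧸ H => wlen Y ((Quotient.out q)⁻¹)) with hM
  set B : ℕ := (Finset.range e).sup (fun i => wlen Y (c ^ i)) with hB
  set MX : ℕ := Finset.univ.sup (fun q : G ⧸ H => wlen X (Quotient.out q)) with hMX
  set K : ℕ := N + ⌈2 * ((M : ℝ) + 1 + B) / τ⌉₊ with hK
  refine ⟨MX + (e * K + e) * wlen X c, fun y hy => ?_⟩
  -- decompose y = t * c ^ j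
  set t : G := Quotient.out ((y : G ⧸ H)) with ht
  have htmk : ((t : G ⧸ H)) = ((y : G ⧸ H)) := QuotientGroup.out_eq' _
  have hty : t⁻¹ * y ∈ H := QuotientGroup.eq.mp htmk
  obtain ⟨j, hj⟩ := Subgroup.mem_zpowers_iff.mp hty
  have hyt : y = t * c ^ j := by rw [hj]; group
  -- wlen Y (c ^ j) ≤ M + 1
  have hwy : wlen Y y ≤ 1 := wlen_le_length Y y [y] (by simp [hy]) (by simp)
  have hcj : wlen Y (c ^ j) ≤ M + 1 := by
    have h1 : wlen Y (c ^ j) = wlen Y (t⁻¹ * y) := by rw [hj]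
    have h2 : wlen Y (t⁻¹ * y) ≤ wlen Y t⁻¹ + wlen Y y := wlen_mul_le Y hYgen _ _
    have h3 : wlen Y t⁻¹ ≤ M := by
      rw [hM, ht]
      exact Finset.le_sup (f := fun q : G ⧸ H => wlen Y ((Quotient.out q)⁻¹))
        (Finset.mem_univ ((y : G ⧸ H)))
    omega
  -- bound |j|
  set k : ℤ := j / (e : ℤ) with hk
  set r : ℤ := j % (e : ℤ) with hr
  have hre : (0 : ℤ) ≤ r := Int.emod_nonneg j (by exact_mod_cast he0.ne')
  have hrlt : r < (e : ℤ) := Int.emod_lt_of_pos j (by exact_mod_cast he0)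
  have hjdecomp : (e : ℤ) * k + r = j := Int.mul_ediv_add_emod j (e : ℤ)
  -- wlen Y (c ^ (e * k)) ≤ M + 1 + B
  have hcek : wlen Y (c ^ ((e : ℤ) * k)) ≤ M + 1 + B := by
    have hsplit : c ^ ((e : ℤ) * k) = c ^ j * (c ^ r)⁻¹ := by
      rw [← zpow_neg, ← zpow_add, ← hjdecomp]; ring_nf
    have h1 : wlen Y (c ^ ((e : ℤ) * k)) ≤ wlen Y (c ^ j) + wlen Y (c ^ r)⁻¹ := by
      rw [hsplit]; exact wlen_mul_le Y hYgen _ _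
    have h2 : wlen Y (c ^ r)⁻¹ ≤ B := by
      rw [wlen_inv Y hYgen]
      have : c ^ r = c ^ r.toNat := by
        rw [← zpow_natCast, Int.toNat_of_nonneg hre]
      rw [this, hB]
      exact Finset.le_sup (f := fun i : ℕ => wlen Y (c ^ i))
        (Finset.mem_range.mpr (by omega))
    omega
  rw [hkey k] at hcek
  -- k.natAbs ≤ K
  have hkK : k.natAbs ≤ K := by
    by_cases hcase : N ≤ m * k.natAbs
    · have hgb := hN (m * k.natAbs) hcase
      have h1 : (τ / 2) * (m * k.natAbs : ℕ) ≤ (M : ℝ) + 1 + B := by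
        calc (τ / 2) * (m * k.natAbs : ℕ) ≤ (wlen Y (g ^ (m * k.natAbs)) : ℝ) := hgb
          _ ≤ (M : ℝ) + 1 + B := by exact_mod_cast hcek
      have h2 : (k.natAbs : ℝ) ≤ (m * k.natAbs : ℕ) := by
        have : k.natAbs ≤ m * k.natAbs := Nat.le_mul_of_pos_left _ (by omega)
        exact_mod_cast this
      have h3 : (k.natAbs : ℝ) ≤ 2 * ((M : ℝ) + 1 + B) / τ := by
        rw [le_div_iff₀ hτpos]
        nlinarith
      have h4 : (k.natAbs : ℝ) ≤ (⌈2 * ((M : ℝ) + 1 + B) / τ⌉₊ : ℝ) :=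
        h3.trans (Nat.le_ceil _)
      have h5 : k.natAbs ≤ ⌈2 * ((M : ℝ) + 1 + B) / τ⌉₊ := by exact_mod_cast h4
      omega
    · have : k.natAbs ≤ m * k.natAbs := Nat.le_mul_of_pos_left _ (by omega)
      omega
  -- |j| ≤ e * K + e
  have hjbound : j.natAbs ≤ e * K + e := by
    have h1 : j.natAbs ≤ ((e : ℤ) * k).natAbs + r.natAbs := by
      rw [← hjdecomp]; exact Int.natAbs_add_le _ _
    have h2 : ((e : ℤ) * k).natAbs = e * k.natAbs := by
      rw [Int.natAbs_mul]; simp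
    have h3 : r.natAbs < e := by omega
    have h4 : e * k.natAbs ≤ e * K := Nat.mul_le_mul_left _ hkK
    omega
  -- final bound
  calc wlen X y ≤ wlen X t + wlen X (c ^ j) := by rw [hyt]; exact wlen_mul_le X hXgen _ _
    _ ≤ MX + (e * K + e) * wlen X c := by
        have h1 : wlen X t ≤ MX := by
          rw [hMX, ht]
          exact Finset.le_sup (f := fun q : G ⧸ H => wlen X (Quotient.out q))
            (Finset.mem_univ ((y : G ⧸ H)))
        have h2 : wlen X (c ^ j) ≤ (e * K + e) * wlen X c := by
          rw [wlen_zpow X hXgen]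
          calc wlen X (c ^ j.natAbs) ≤ j.natAbs * wlen X c := wlen_pow_le X hXgen c _
            _ ≤ (e * K + e) * wlen X c := Nat.mul_le_mul_right _ hjbound
        omega
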